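/- Let (g, [·,·], α) be a multiplicative Hom-Lie algebra and define the n-bracket recursively by [x₁,x₂]₂ = [x₁,x₂] and [x₁,…,x_n]_n = [[x₁,…,x_{n−1}]_{n−1}, α^{n−2}(x_n)]. Then for all x ∈ g and y₁,…,y_n ∈ g: ad_{α^{n−1}(x)}([y₁,…,y_n]_n) = ∑_{k=1}^n [α(y₁),…,α(y_{k−1}), ad_x(y_k), α(y_{k+1}),…,α(y_n)]_n, where ad_x(y) = [x,y]. -/
import Mathlib


/-- The iterated n-ary bracket (n = m+2):
[x₁,…,x_n]_n = [[x₁,…,x_{n−1}]_{n−1}, α^{n−2}(x_n)], with [x₁,x₂]₂ = [x₁,x₂]. -/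
noncomputable def iterBracket {K g : Type*} [Field K] [AddCommGroup g] [Module K g]
    (b : g →ₗ[K] g →ₗ[K] g) (α : g → g) : (m : ℕ) → (Fin (m + 2) → g) → g
  | 0, x => b (x 0) (x 1)
  | m + 1, x =>
      b (iterBracket b α m (fun i => x i.castSucc)) (α^[m + 1] (x (Fin.last (m + 2))))

section Aux

variable {K g : Type*} [Field K] [AddCommGroup g] [Module K g]
  (b : g →ₗ[K] g →ₗ[K] g) (α : g →ₗ[K] g)

lemma iterate_bracket (hmult : ∀ x y, α (b x y) = b (α x) (α y)) :
    ∀ (n : ℕ) (x y : g), (⇑α)^[n] (b x y) = b ((⇑α)^[n] x) ((⇑α)^[n] y) := by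
  intro n
  induction n with
  | zero => intro x y; simp
  | succ n ih =>
      intro x y
      rw [Function.iterate_succ_apply', Function.iterate_succ_apply',
        Function.iterate_succ_apply', ih, hmult]

lemma alpha_iterBracket (hmult : ∀ x y, α (b x y) = b (α x) (α y)) :
    ∀ (m : ℕ) (y : Fin (m + 2) → g),
      α (iterBracket b (⇑α) m y) = iterBracket b (⇑α) m (fun i => α (y i)) := by
  intro m
  induction m with
  | zero => intro y; simp [iterBracket, hmult]
  | succ m ih =>
      intro y
      simp only [iterBracket]
      rw [hmult, ih, ← Function.iterate_succ_apply' (⇑α) (m + 1),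
        Function.iterate_succ_apply (⇑α) (m + 1)]

lemma hom_derivation (hskew : ∀ x y, b x y = - b y x)
    (hJac : ∀ x y z : g, b (α x) (b y z) + b (α y) (b z x) + b (α z) (b x y) = 0)
    (x y z : g) :
    b (α x) (b y z) = b (b x y) (α z) + b (α y) (b x z) := by
  have h := hJac x y z
  rw [hskew z x, map_neg, show b (α z) (b x y) = - b (b x y) (α z) from hskew _ _] at h
  rw [← sub_eq_zero, ← h]
  abel

end Aux

/-- in a multiplicative Hom-Lie algebra (g,[·,·],α), for the
iterated n-ary bracket (n = m+2) one has
ad_{α^{n−1}(x)}([y₁,…,y_n]_n) = ∑_k [α(y₁),…,ad_x(y_k),…,α(y_n)]_n. -/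
theorem ad_iterBracket {K g : Type*} [Field K] [CharZero K] [AddCommGroup g] [Module K g]
    (b : g →ₗ[K] g →ₗ[K] g) (α : g →ₗ[K] g)
    (hskew : ∀ x y, b x y = - b y x)
    (hJac : ∀ x y z : g, b (α x) (b y z) + b (α y) (b z x) + b (α z) (b x y) = 0)
    (hmult : ∀ x y, α (b x y) = b (α x) (α y)) :
    ∀ (m : ℕ) (x : g) (y : Fin (m + 2) → g),
      b ((⇑α)^[m + 1] x) (iterBracket b (⇑α) m y) =
        ∑ k : Fin (m + 2),
          iterBracket b (⇑α) m (Function.update (fun j => α (y j)) k (b x (y k))) := by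
  intro m
  induction m with
  | zero =>
      intro x y
      simp only [iterBracket, Function.iterate_one]
      rw [Fin.sum_univ_two]
      simp only [Function.update_self,
        Function.update_of_ne (show (1 : Fin 2) ≠ 0 by decide),
        Function.update_of_ne (show (0 : Fin 2) ≠ 1 by decide)]
      exact hom_derivation b α hskew hJac x (y 0) (y 1)
  | succ m ih =>
      intro x y
      have hd := hom_derivation b α hskew hJac ((⇑α)^[m + 1] x)
        (iterBracket b (⇑α) m (fun i => y i.castSucc))
        ((⇑α)^[m + 1] (y (Fin.last (m + 2))))
      have hlast :
          iterBracket b (⇑α) (m + 1)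
              (Function.update (fun j => α (y j)) (Fin.last (m + 2))
                (b x (y (Fin.last (m + 2))))) =
            b (iterBracket b (⇑α) m (fun i => α (y i.castSucc)))
              ((⇑α)^[m + 1] (b x (y (Fin.last (m + 2))))) := by
        have h1 : (fun i : Fin (m + 2) =>
            Function.update (fun j => α (y j)) (Fin.last (m + 2))
              (b x (y (Fin.last (m + 2)))) i.castSucc) = fun i => α (y i.castSucc) :=
          funext fun i => Function.update_of_ne (Fin.castSucc_lt_last i).ne _ _
        simp only [iterBracket, h1, Function.update_self]
      have hcast : ∀ k : Fin (m + 2),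
          iterBracket b (⇑α) (m + 1)
              (Function.update (fun j => α (y j)) k.castSucc (b x (y k.castSucc))) =
            b (iterBracket b (⇑α) m
                (Function.update (fun j => α (y j.castSucc)) k (b x (y k.castSucc))))
              ((⇑α)^[m + 1] (α (y (Fin.last (m + 2))))) := by
        intro k
        have h2 : (fun i : Fin (m + 2) =>
            Function.update (fun j => α (y j)) k.castSucc
              (b x (y k.castSucc)) i.castSucc) =
            Function.update (fun j => α (y j.castSucc)) k (b x (y k.castSucc)) := by
          funext i
          by_cases h : i = k
          · subst h
            rw [Function.update_self, Function.update_self]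
          · rw [Function.update_of_ne (fun hc => h (Fin.castSucc_injective _ hc)),
              Function.update_of_ne h]
        simp only [iterBracket, h2,
          Function.update_of_ne (Fin.castSucc_lt_last k).ne']
      conv_rhs => rw [Fin.sum_univ_castSucc]
      simp only [hcast, hlast]
      simp only [iterBracket]
      rw [Function.iterate_succ_apply', hd, ih x (fun i => y i.castSucc),
        alpha_iterBracket b α hmult, ← iterate_bracket b α hmult,
        ← Function.iterate_succ_apply' (⇑α) (m + 1),
        Function.iterate_succ_apply (⇑α) (m + 1)]
      rw [map_sum, LinearMap.sum_apply]
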